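/- A finite unordered rooted tree τ is self-nested if and only if, for every pair of heights 0 ≤ h2 < h1 ≤ H(τ), all the components of the vector ρ_τ(h1,h2) of its height profile are equal. -/

import Mathlib

/-- A finite rooted tree whose vertices form a finite subset `supp` of `ℕ`.
`par` maps each vertex to its parent; the root is a fixed point of `par`
(so it has no parent), and every vertex reaches the root by iterating `par`
(connectedness / acyclicity). -/
structure FTree where
  supp : Finset ℕ
  root : ℕ
  root_mem : root ∈ supp
  par : ℕ → ℕ
  par_mem : ∀ v ∈ supp, par v ∈ supp
  par_root : par root = root
  reach : ∀ v ∈ supp, ∃ n, par^[n] v = root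

namespace FTree

/-- Depth of a vertex: least number of parent steps needed to reach the root. -/
noncomputable def depth (t : FTree) (v : ℕ) : ℕ :=
  if h : v ∈ t.supp then Nat.find (t.reach v h) else 0

/-- `w` is a (weak) descendant of `v` in `t`. -/
def IsDesc (t : FTree) (v w : ℕ) : Prop :=
  w ∈ t.supp ∧ ∃ n ≤ t.depth w, t.par^[n] w = v

open Classical in
/-- Vertex set of the subtree `t[v]` rooted at `v`. -/
noncomputable def desc (t : FTree) (v : ℕ) : Finset ℕ :=
  t.supp.filter (fun w => t.IsDesc v w)

/-- Height of the subtree `t[v]` rooted at `v`. -/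
noncomputable def heightAt (t : FTree) (v : ℕ) : ℕ :=
  (t.desc v).sup (fun w => t.depth w) - t.depth v

/-- Height of the tree. -/
noncomputable def height (t : FTree) : ℕ := t.heightAt t.root

/-- The set of children of `v` in `t`. -/
def children (t : FTree) (v : ℕ) : Finset ℕ :=
  t.supp.filter (fun w => t.par w = v ∧ w ≠ t.root)

open Classical in
/-- `γ_h(v)`: number of children of `v` whose subtree has height `h`. -/
noncomputable def gam (t : FTree) (v h : ℕ) : ℕ :=
  ((t.children v).filter (fun c => t.heightAt c = h)).card

/-- The subtree of `t` rooted at `v` is isomorphic (as an unordered rooted tree)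
to the subtree of `s` rooted at `w`: a bijection between the vertex sets sending
root to root and commuting with the parent maps (i.e. mapping edges to edges). -/
def SubtreeIso (t : FTree) (v : ℕ) (s : FTree) (w : ℕ) : Prop :=
  ∃ φ : ℕ → ℕ, Set.BijOn φ (t.desc v : Set ℕ) (s.desc w : Set ℕ) ∧ φ v = w ∧
    ∀ x ∈ t.desc v, x ≠ v → φ (t.par x) = s.par (φ x)

/-- Isomorphism of rooted trees. -/
def TreeIso (t s : FTree) : Prop := SubtreeIso t t.root s s.root

/-- A tree is self-nested if any two of its subtrees of the same height
are isomorphic. -/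
def SelfNested (t : FTree) : Prop :=
  ∀ v ∈ t.supp, ∀ w ∈ t.supp, t.heightAt v = t.heightAt w → SubtreeIso t v t w

open Classical in
/-- Height profile entry `ρ_t(h1,h2)`: the multiset (family up to permutation) of
the values `γ_{h2}(v)` over all vertices `v` of `t` with `H(t[v]) = h1`. -/
noncomputable def profile (t : FTree) (h1 h2 : ℕ) : Multiset ℕ :=
  (t.supp.filter (fun v => t.heightAt v = h1)).val.map (fun v => t.gam v h2)

/-- Number of vertices of `t`. -/
def numV (t : FTree) : ℕ := t.supp.card

/-- `a` is a (weak) ancestor of `b`. -/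
def IsAnc (t : FTree) (a b : ℕ) : Prop := ∃ n, t.par^[n] b = a

/-- `a` is a proper ancestor of `b`. -/
def ProperAnc (t : FTree) (a b : ℕ) : Prop := a ≠ b ∧ t.IsAnc a b

/-- `l` is the least common ancestor of `a` and `b`. -/
def IsLCA (t : FTree) (a b l : ℕ) : Prop :=
  l ∈ t.supp ∧ t.IsAnc l a ∧ t.IsAnc l b ∧
    ∀ m ∈ t.supp, t.IsAnc m a → t.IsAnc m b → t.IsAnc m l

/-- `φ`, restricted to the domain `D ⊆ t.supp`, is a constrained mapping in the
sense of Zhang from `t` to `s`: a one-to-one correspondence preserving the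
ancestor order, satisfying moreover Zhang's condition on least common ancestors. -/
def ZhangMapping (t s : FTree) (D : Finset ℕ) (φ : ℕ → ℕ) : Prop :=
  D ⊆ t.supp ∧ (∀ x ∈ D, φ x ∈ s.supp) ∧ Set.InjOn φ (D : Set ℕ) ∧
  (∀ a ∈ D, ∀ b ∈ D, (t.ProperAnc a b ↔ s.ProperAnc (φ a) (φ b))) ∧
  (∀ v1 ∈ D, ∀ v2 ∈ D, ∀ v3 ∈ D, ∀ l l',
    t.IsLCA v1 v2 l → s.IsLCA (φ v1) (φ v2) l' →
    (t.ProperAnc l v3 ↔ s.ProperAnc l' (φ v3)))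

/-- Allowed inserting operation (AI): adding a new internal vertex `w` as a child of
`v`, making `w` the parent of the child `c` of `v`; allowed only if
`H(t[c]) + 1 < H(t[v])`. -/
def InsertAI (t θ : FTree) : Prop :=
  ∃ v c w, v ∈ t.supp ∧ c ∈ t.children v ∧ w ∉ t.supp ∧
    t.heightAt c + 1 < t.heightAt v ∧
    θ.supp = insert w t.supp ∧ θ.root = t.root ∧
    θ.par w = v ∧ θ.par c = w ∧ ∀ x ∈ t.supp, x ≠ c → θ.par x = t.par x

/-- Allowed inserting operation (AS): attaching a tree `s` as a new child subtree of
`v`; allowed only if `H(s) + 1 ≤ H(t[v])`. -/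
def InsertAS (t θ : FTree) : Prop :=
  ∃ (v : ℕ) (s : FTree), v ∈ t.supp ∧ Disjoint s.supp t.supp ∧
    s.height + 1 ≤ t.heightAt v ∧
    θ.supp = t.supp ∪ s.supp ∧ θ.root = t.root ∧ θ.par s.root = v ∧
    (∀ x ∈ t.supp, θ.par x = t.par x) ∧ (∀ x ∈ s.supp, x ≠ s.root → θ.par x = s.par x)

/-- One allowed inserting operation. -/
def InsertStep (t θ : FTree) : Prop := InsertAI t θ ∨ InsertAS t θ

/-- Allowed deleting operation (DI): deleting an internal vertex `v`, child of `u`,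
having a unique child `c` (which becomes a child of `u`); allowed only if `u` has
another child `v'` with `H(t[v']) ≥ H(t[v])`. -/
def DeleteDI (t θ : FTree) : Prop :=
  ∃ u v c, v ∈ t.children u ∧ t.children v = {c} ∧
    (∃ v' ∈ t.children u, v' ≠ v ∧ t.heightAt v ≤ t.heightAt v') ∧
    θ.supp = t.supp.erase v ∧ θ.root = t.root ∧ θ.par c = u ∧
    ∀ x ∈ t.supp, x ≠ v → x ≠ c → θ.par x = t.par x

/-- Allowed deleting operation (DS): deleting the whole subtree rooted at a child `w`
of `v`; allowed only if `v` has another child `w'` with `H(t[w']) + 1 = H(t[v])`. -/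
def DeleteDS (t θ : FTree) : Prop :=
  ∃ v w, w ∈ t.children v ∧
    (∃ w' ∈ t.children v, w' ≠ w ∧ t.heightAt w' + 1 = t.heightAt v) ∧
    θ.supp = t.supp \ t.desc w ∧ θ.root = t.root ∧
    ∀ x ∈ θ.supp, θ.par x = t.par x

/-- One allowed deleting operation. -/
def DeleteStep (t θ : FTree) : Prop := DeleteDI t θ ∨ DeleteDS t θ

/-- A general single-vertex inserting operation: a new vertex `w` is added as a child
of `v`, and the vertices of a subset `C` of the children of `v` become children of `w`. -/
def GeneralInsert (t θ : FTree) : Prop :=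
  ∃ (v w : ℕ) (C : Finset ℕ), v ∈ t.supp ∧ w ∉ t.supp ∧ C ⊆ t.children v ∧
    θ.supp = insert w t.supp ∧ θ.root = t.root ∧ θ.par w = v ∧
    (∀ x ∈ C, θ.par x = w) ∧ ∀ x ∈ t.supp, x ∉ C → θ.par x = t.par x

/-- Cost of a constrained mapping with domain `D`: vertices of `t` not in the domain
are deleted, vertices of `s` not in the image are inserted (unit costs). -/
def mappingCost (t s : FTree) (D : Finset ℕ) (φ : ℕ → ℕ) : ℕ :=
  (t.numV - D.card) + (s.numV - (D.image φ).card)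

/-- Zhang's constrained edit distance between unordered trees: the minimal cost
associated with a constrained mapping between `t` and `s`. -/
noncomputable def DZ (t s : FTree) : ℕ :=
  sInf { c | ∃ (D : Finset ℕ) (φ : ℕ → ℕ), ZhangMapping t s D φ ∧ c = mappingCost t s D φ }

end FTree

/-!
An isomorphism between two subtrees maps the children of one root bijectively onto the
children of the other and restricts to isomorphisms between the subtrees they span, so by
induction on the height it preserves heights, hence the numbers `γ_h`. Conversely, if `γ_h(v)`
depends only on `H(t[v])`, two vertices of equal height have equally many children of each
height; pairing these children and gluing the isomorphisms provided by induction on the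
height gives an isomorphism.
-/

open Finset in
theorem Finset.exists_equiv_of_card_filter_eq {α β : Type*} [DecidableEq β] {f : α → β}
    {A B : Finset α} (h : ∀ b, #{a ∈ A | f a = b} = #{a ∈ B | f a = b}) :
    ∃ E : A ≃ B, ∀ a, f (E a) = f a := by
  have card_fiber (C : Finset α) (b : β) :
      Fintype.card {a : C // f a = b} = #{a ∈ C | f a = b} := by
    rw [Fintype.card_subtype, ← card_map (Function.Embedding.subtype _)]
    congr 1
    ext x
    simp [and_comm]
  have hfib (b : β) : Nonempty ({a : A // f a = b} ≃ {a : B // f a = b}) :=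
    Fintype.card_eq.1 <| by rw [card_fiber, card_fiber, h]
  exact ⟨Equiv.ofFiberEquiv fun b => (hfib b).some,
    fun a => Equiv.ofFiberEquiv_map (fun b => (hfib b).some) a⟩

namespace FTree

open Finset

variable {t s : FTree} {u v w x y c : ℕ} {φ : ℕ → ℕ}

lemma iterate_par_mem (hv : v ∈ t.supp) (n : ℕ) : t.par^[n] v ∈ t.supp := by
  induction n with
  | zero => exact hv
  | succ n ih => rw [Function.iterate_succ_apply']; exact t.par_mem _ ih

lemma iterate_par_depth (hv : v ∈ t.supp) : t.par^[t.depth v] v = t.root := by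
  rw [depth, dif_pos hv]; exact Nat.find_spec (t.reach v hv)

lemma depth_le_of_iterate_par (hv : v ∈ t.supp) {n : ℕ} (h : t.par^[n] v = t.root) :
    t.depth v ≤ n := by
  rw [depth, dif_pos hv]; exact Nat.find_min' _ h

lemma depth_par_add_one (hv : v ∈ t.supp) (hne : v ≠ t.root) :
    t.depth (t.par v) + 1 = t.depth v := by
  have hpos : 0 < t.depth v := by
    by_contra! h0
    have := iterate_par_depth hv
    rw [Nat.le_zero.1 h0] at this
    exact hne this
  have hle : t.depth (t.par v) ≤ t.depth v - 1 := by
    refine depth_le_of_iterate_par (t.par_mem v hv) ?_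
    rw [← Function.iterate_succ_apply, Nat.succ_eq_add_one, Nat.sub_add_cancel hpos]
    exact iterate_par_depth hv
  have hge : t.depth v ≤ t.depth (t.par v) + 1 := by
    refine depth_le_of_iterate_par hv ?_
    rw [Function.iterate_succ_apply]
    exact iterate_par_depth (t.par_mem v hv)
  omega

lemma depth_par_le (hv : v ∈ t.supp) : t.depth (t.par v) ≤ t.depth v := by
  by_cases hroot : v = t.root
  · rw [hroot, t.par_root]
  · have := depth_par_add_one hv hroot
    omega

lemma depth_iterate_par_le (hv : v ∈ t.supp) (n : ℕ) : t.depth (t.par^[n] v) ≤ t.depth v := by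
  induction n with
  | zero => rfl
  | succ n ih =>
    rw [Function.iterate_succ_apply']
    exact (depth_par_le (iterate_par_mem hv n)).trans ih

lemma IsAnc.total (ha : t.IsAnc u x) (hb : t.IsAnc v x) : t.IsAnc u v ∨ t.IsAnc v u := by
  obtain ⟨n, rfl⟩ := ha
  obtain ⟨m, rfl⟩ := hb
  rcases le_total n m with h | h
  · obtain ⟨k, rfl⟩ := Nat.exists_eq_add_of_le h
    exact Or.inr ⟨k, by rw [add_comm, Function.iterate_add_apply]⟩
  · obtain ⟨k, rfl⟩ := Nat.exists_eq_add_of_le h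
    exact Or.inl ⟨k, by rw [add_comm, Function.iterate_add_apply]⟩

lemma IsAnc.trans (h₁ : t.IsAnc u v) (h₂ : t.IsAnc v x) : t.IsAnc u x := by
  obtain ⟨n, rfl⟩ := h₁
  obtain ⟨m, rfl⟩ := h₂
  exact ⟨n + m, Function.iterate_add_apply _ _ _ _⟩

lemma isAnc_par : t.IsAnc (t.par v) v := ⟨1, rfl⟩

/-- The bound `n ≤ t.depth w` built into `IsDesc` is harmless: a longer chain of parents
ends at the root, which is reached already after `t.depth w` steps. -/
lemma mem_desc : w ∈ t.desc v ↔ w ∈ t.supp ∧ t.IsAnc v w := by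
  classical
  refine ⟨fun h => ?_, fun ⟨hw, n, hn⟩ => ?_⟩
  · obtain ⟨hw, n, -, hn⟩ := (mem_filter.1 h).2
    exact ⟨hw, n, hn⟩
  · refine mem_filter.2 ⟨hw, hw, ?_⟩
    by_cases hle : n ≤ t.depth w
    · exact ⟨n, hle, hn⟩
    · refine ⟨t.depth w, le_rfl, ?_⟩
      obtain ⟨k, rfl⟩ := Nat.exists_eq_add_of_le (le_of_not_ge hle)
      rw [← hn, add_comm, Function.iterate_add_apply, iterate_par_depth hw,
        Function.iterate_fixed t.par_root]

lemma mem_supp_of_mem_desc (hw : w ∈ t.desc v) : w ∈ t.supp := (mem_desc.1 hw).1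

lemma mem_supp_of_mem_desc' (hw : w ∈ t.desc v) : v ∈ t.supp := by
  obtain ⟨hws, n, rfl⟩ := mem_desc.1 hw
  exact iterate_par_mem hws n

lemma mem_desc_self (hv : v ∈ t.supp) : v ∈ t.desc v := mem_desc.2 ⟨hv, 0, rfl⟩

lemma desc_trans (hx : x ∈ t.desc v) (hw : w ∈ t.desc x) : w ∈ t.desc v :=
  mem_desc.2 ⟨(mem_desc.1 hw).1, (mem_desc.1 hx).2.trans (mem_desc.1 hw).2⟩

lemma depth_le_of_mem_desc (hw : w ∈ t.desc v) : t.depth v ≤ t.depth w := by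
  obtain ⟨hws, n, rfl⟩ := mem_desc.1 hw
  exact depth_iterate_par_le hws n

lemma par_mem_desc (hw : w ∈ t.desc v) (hne : w ≠ v) : t.par w ∈ t.desc v := by
  obtain ⟨hw, n, hn⟩ := mem_desc.1 hw
  cases n with
  | zero => exact absurd hn hne
  | succ n => exact mem_desc.2 ⟨t.par_mem w hw, n, hn⟩

lemma mem_desc_of_par_mem_desc (hw : w ∈ t.supp) (h : t.par w ∈ t.desc v) : w ∈ t.desc v :=
  mem_desc.2 ⟨hw, (mem_desc.1 h).2.trans isAnc_par⟩

lemma mem_children : c ∈ t.children v ↔ c ∈ t.supp ∧ t.par c = v ∧ c ≠ t.root :=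
  mem_filter

lemma mem_supp_of_mem_children (hc : c ∈ t.children v) : v ∈ t.supp := by
  obtain ⟨hcs, rfl, -⟩ := mem_children.1 hc
  exact t.par_mem c hcs

lemma depth_of_mem_children (hc : c ∈ t.children v) : t.depth c = t.depth v + 1 := by
  obtain ⟨hcs, rfl, hne⟩ := mem_children.1 hc
  exact (depth_par_add_one hcs hne).symm

lemma ne_of_mem_children (hc : c ∈ t.children v) : c ≠ v := by
  have := depth_of_mem_children hc
  rintro rfl
  omega

lemma mem_desc_of_mem_children (hc : c ∈ t.children v) : c ∈ t.desc v :=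
  mem_desc.2 ⟨(mem_children.1 hc).1, 1, (mem_children.1 hc).2.1⟩

lemma desc_subset_of_mem_children (hc : c ∈ t.children v) : t.desc c ⊆ t.desc v :=
  fun _ => desc_trans (mem_desc_of_mem_children hc)

lemma not_mem_desc_of_mem_children (hc : c ∈ t.children v) : v ∉ t.desc c := fun h => by
  have := depth_le_of_mem_desc h
  have := depth_of_mem_children hc
  omega

lemma mem_children_of_par_eq (hw : w ∈ t.supp) (hpar : t.par w = v) (hne : w ≠ v) :
    w ∈ t.children v :=
  mem_children.2 ⟨hw, hpar, fun h => hne (by rw [← hpar, h, t.par_root])⟩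

lemma eq_of_mem_desc_of_mem_children (hc : c ∈ t.children v) (hc' : x ∈ t.children v)
    (hy : y ∈ t.desc c) (hy' : y ∈ t.desc x) : c = x := by
  wlog hanc : t.IsAnc c x generalizing c x
  · exact (this hc' hc hy' hy (((mem_desc.1 hy).2.total (mem_desc.1 hy').2).resolve_left
      hanc)).symm
  by_contra hne
  have hx : x ∈ t.desc c := mem_desc.2 ⟨(mem_children.1 hc').1, hanc⟩
  have := par_mem_desc hx (Ne.symm hne)
  rw [(mem_children.1 hc').2.1] at this
  exact not_mem_desc_of_mem_children hc this

lemma exists_mem_children_of_mem_desc (hw : w ∈ t.desc v) (hne : w ≠ v) :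
    ∃ c ∈ t.children v, w ∈ t.desc c := by
  obtain ⟨hws, n, hn⟩ := mem_desc.1 hw
  clear hw
  induction n generalizing w with
  | zero => exact absurd hn hne
  | succ n ih =>
    by_cases hpar : t.par w = v
    · exact ⟨w, mem_children_of_par_eq hws hpar hne, mem_desc_self hws⟩
    · obtain ⟨c, hc, hpc⟩ := ih hpar (t.par_mem w hws) hn
      exact ⟨c, hc, mem_desc_of_par_mem_desc hws hpc⟩

lemma mem_desc_iff_eq_or_exists_mem_children (hv : v ∈ t.supp) :
    w ∈ t.desc v ↔ w = v ∨ ∃ c ∈ t.children v, w ∈ t.desc c := by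
  refine ⟨fun hw => or_iff_not_imp_left.2 (exists_mem_children_of_mem_desc hw), ?_⟩
  rintro (rfl | ⟨c, hc, hw⟩)
  · exact mem_desc_self hv
  · exact desc_subset_of_mem_children hc hw

lemma desc_eq_insert_biUnion_children (hv : v ∈ t.supp) :
    t.desc v = insert v ((t.children v).biUnion t.desc) := by
  ext w
  simp only [mem_insert, mem_biUnion, mem_desc_iff_eq_or_exists_mem_children hv]

lemma heightAt_eq_sup_children (hv : v ∈ t.supp) :
    t.heightAt v = (t.children v).sup fun c => t.heightAt c + 1 := by
  have hchild : ∀ c ∈ t.children v,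
      t.heightAt c + 1 = (t.desc c).sup (fun w => t.depth w) - t.depth v := fun c hc => by
    have h₁ := le_sup (f := fun w => t.depth w) (mem_desc_self (mem_children.1 hc).1)
    have h₂ := depth_of_mem_children hc
    rw [heightAt]
    omega
  have hsup := apply_sup_eq_sup_comp (s := t.children v)
    (f := fun c => (t.desc c).sup fun w => t.depth w) (· - t.depth v)
    (fun a b => (Nat.sub_max_sub_right a b _).symm) (Nat.zero_sub _)
  rw [sup_congr rfl hchild, ← Function.comp_def (· - t.depth v), ← hsup, heightAt,
    desc_eq_insert_biUnion_children hv, sup_insert, sup_biUnion]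
  omega

lemma heightAt_lt_of_mem_children (hc : c ∈ t.children v) : t.heightAt c < t.heightAt v := by
  rw [heightAt_eq_sup_children (mem_supp_of_mem_children hc)]
  exact Nat.lt_of_succ_le (le_sup (f := fun c => t.heightAt c + 1) hc)

lemma heightAt_le_heightAt_par (hv : v ∈ t.supp) : t.heightAt v ≤ t.heightAt (t.par v) := by
  by_cases hroot : v = t.root
  · rw [hroot, t.par_root]
  · exact (heightAt_lt_of_mem_children (mem_children.2 ⟨hv, rfl, hroot⟩)).le

lemma heightAt_le_height (hv : v ∈ t.supp) : t.heightAt v ≤ t.height := by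
  rw [height, ← iterate_par_depth hv]
  induction t.depth v with
  | zero => rfl
  | succ n ih =>
    rw [Function.iterate_succ_apply']
    exact ih.trans (heightAt_le_heightAt_par (iterate_par_mem hv n))

lemma gam_eq_zero_of_heightAt_le {h : ℕ} (hle : t.heightAt v ≤ h) : t.gam v h = 0 := by
  rw [gam, card_eq_zero, filter_eq_empty_iff]
  intro c hc
  exact (heightAt_lt_of_mem_children hc).trans_le hle |>.ne

structure IsSubtreeIsoMap (t : FTree) (v : ℕ) (s : FTree) (w : ℕ) (φ : ℕ → ℕ) : Prop where
  bijOn : Set.BijOn φ (t.desc v) (s.desc w)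
  map_root : φ v = w
  map_par : ∀ x ∈ t.desc v, x ≠ v → φ (t.par x) = s.par (φ x)

lemma subtreeIso_iff : SubtreeIso t v s w ↔ ∃ φ, IsSubtreeIsoMap t v s w φ :=
  ⟨fun ⟨φ, h₁, h₂, h₃⟩ => ⟨φ, h₁, h₂, h₃⟩, fun ⟨φ, h₁, h₂, h₃⟩ => ⟨φ, h₁, h₂, h₃⟩⟩

namespace IsSubtreeIsoMap

lemma map_mem_desc (hφ : IsSubtreeIsoMap t v s w φ) (hx : x ∈ t.desc v) : φ x ∈ s.desc w :=
  hφ.bijOn.mapsTo hx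

lemma map_ne (hφ : IsSubtreeIsoMap t v s w φ) (hx : x ∈ t.desc v) (hne : x ≠ v) : φ x ≠ w :=
  fun h => hne <| hφ.bijOn.injOn hx (mem_desc_self (mem_supp_of_mem_desc' hx))
    (h.trans hφ.map_root.symm)

lemma map_mem_children (hφ : IsSubtreeIsoMap t v s w φ) (hc : c ∈ t.children v) :
    φ c ∈ s.children w := by
  have hcd := mem_desc_of_mem_children hc
  have hcv := ne_of_mem_children hc
  refine mem_children_of_par_eq (mem_supp_of_mem_desc (hφ.map_mem_desc hcd)) ?_
    (hφ.map_ne hcd hcv)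
  rw [← hφ.map_par c hcd hcv, (mem_children.1 hc).2.1, hφ.map_root]

lemma bijOn_children (hφ : IsSubtreeIsoMap t v s w φ) :
    Set.BijOn φ (t.children v) (s.children w) := by
  refine ⟨fun c hc => hφ.map_mem_children hc,
    hφ.bijOn.injOn.mono fun c hc => mem_desc_of_mem_children hc, fun c' hc' => ?_⟩
  obtain ⟨y, hy, rfl⟩ := hφ.bijOn.surjOn (mem_desc_of_mem_children hc')
  have hyv : y ≠ v := by
    rintro rfl
    exact ne_of_mem_children hc' hφ.map_root
  have hpar : t.par y = v := hφ.bijOn.injOn (par_mem_desc hy hyv)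
    (mem_desc_self (mem_supp_of_mem_desc' hy))
    (by rw [hφ.map_par y hy hyv, (mem_children.1 hc').2.1, hφ.map_root])
  exact ⟨y, mem_children_of_par_eq (mem_supp_of_mem_desc hy) hpar hyv, rfl⟩

lemma children_eq_image (hφ : IsSubtreeIsoMap t v s w φ) :
    s.children w = (t.children v).image φ := by
  rw [← coe_inj, coe_image, hφ.bijOn_children.image_eq]

lemma mapsTo_desc_of_mem_children (hφ : IsSubtreeIsoMap t v s w φ) (hc : c ∈ t.children v) :
    Set.MapsTo φ (t.desc c) (s.desc (φ c)) := by
  intro y hy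
  obtain ⟨hys, n, hn⟩ := mem_desc.1 hy
  induction n generalizing y with
  | zero =>
    subst hn
    exact mem_desc_self (mem_supp_of_mem_desc (hφ.map_mem_desc (mem_desc_of_mem_children hc)))
  | succ n ih =>
    have hpar := ih (mem_desc.2 ⟨t.par_mem y hys, n, hn⟩) (t.par_mem y hys) hn
    have hyv : y ≠ v := fun h => not_mem_desc_of_mem_children hc (h ▸ hy)
    have hyd := desc_subset_of_mem_children hc hy
    rw [hφ.map_par y hyd hyv] at hpar
    exact mem_desc_of_par_mem_desc (mem_supp_of_mem_desc (hφ.map_mem_desc hyd)) hpar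

lemma restrict_child (hφ : IsSubtreeIsoMap t v s w φ) (hc : c ∈ t.children v) :
    IsSubtreeIsoMap t c s (φ c) φ := by
  refine ⟨⟨hφ.mapsTo_desc_of_mem_children hc,
    hφ.bijOn.injOn.mono (desc_subset_of_mem_children hc), fun z hz => ?_⟩, rfl,
    fun x hx hxc => hφ.map_par x (desc_subset_of_mem_children hc hx)
      fun h => not_mem_desc_of_mem_children hc (h ▸ hx)⟩
  have hφc := hφ.map_mem_children hc
  obtain ⟨y, hy, rfl⟩ := hφ.bijOn.surjOn (desc_subset_of_mem_children hφc hz)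
  have hyv : y ≠ v := by
    rintro rfl
    exact not_mem_desc_of_mem_children hφc (hφ.map_root ▸ hz)
  obtain ⟨c', hc', hyc'⟩ := exists_mem_children_of_mem_desc hy hyv
  have hcc' : φ c' = φ c := eq_of_mem_desc_of_mem_children (hφ.map_mem_children hc') hφc
    (hφ.mapsTo_desc_of_mem_children hc' hyc') hz
  rw [hφ.bijOn_children.injOn hc' hc hcc'] at hyc'
  exact ⟨y, hyc', rfl⟩

lemma heightAt_eq (hφ : IsSubtreeIsoMap t v s w φ) (hv : v ∈ t.supp) :
    t.heightAt v = s.heightAt w := by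
  induction hn : t.heightAt v using Nat.strong_induction_on generalizing v w φ with
  | _ n ih =>
  have hw : w ∈ s.supp := mem_supp_of_mem_desc (hφ.map_root ▸ hφ.map_mem_desc (mem_desc_self hv))
  rw [← hn, heightAt_eq_sup_children hv, heightAt_eq_sup_children hw, hφ.children_eq_image,
    sup_image]
  refine sup_congr rfl fun c hc => ?_
  rw [Function.comp_apply, ih _ (hn ▸ heightAt_lt_of_mem_children hc) (hφ.restrict_child hc)
    (mem_children.1 hc).1 rfl]

end IsSubtreeIsoMap

lemma SubtreeIso.gam_eq (hiso : SubtreeIso t v s w) (h : ℕ) : t.gam v h = s.gam w h := by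
  obtain ⟨φ, hφ⟩ := subtreeIso_iff.1 hiso
  rw [gam, gam, hφ.children_eq_image, filter_image,
    card_image_of_injOn (hφ.bijOn_children.injOn.mono (filter_subset _ _))]
  refine congrArg card (filter_congr fun c hc => ?_)
  rw [← (hφ.restrict_child hc).heightAt_eq (mem_children.1 hc).1]

lemma mem_desc_iff_eq_or_exists_children (hv : v ∈ t.supp) {y : ℕ} :
    y ∈ t.desc v ↔ y = v ∨ ∃ c : t.children v, y ∈ t.desc c := by
  simp only [mem_desc_iff_eq_or_exists_mem_children hv, Subtype.exists, exists_prop]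

open Classical in
noncomputable def glue (t : FTree) (v w : ℕ) (ψ : t.children v → ℕ → ℕ) (y : ℕ) : ℕ :=
  if y = v then w else if hy : ∃ c : t.children v, y ∈ t.desc c then ψ hy.choose y else y

lemma glue_self (ψ : t.children v → ℕ → ℕ) : t.glue v w ψ v = w := if_pos rfl

lemma glue_of_mem_desc (ψ : t.children v → ℕ → ℕ) (c : t.children v) (hy : y ∈ t.desc c) :
    t.glue v w ψ y = ψ c y := by
  have hex : ∃ c : t.children v, y ∈ t.desc c := ⟨c, hy⟩
  have hc : hex.choose = c :=
    Subtype.ext (eq_of_mem_desc_of_mem_children hex.choose.2 c.2 hex.choose_spec hy)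
  have hyv : y ≠ v := fun h => not_mem_desc_of_mem_children c.2 (h ▸ hy)
  simp only [glue, if_neg hyv, dif_pos hex, hc]

lemma isSubtreeIsoMap_glue (hv : v ∈ t.supp) (hw : w ∈ s.supp) (e : t.children v ≃ s.children w)
    {ψ : t.children v → ℕ → ℕ} (hψ : ∀ c : t.children v, IsSubtreeIsoMap t c s (e c) (ψ c)) :
    IsSubtreeIsoMap t v s w (t.glue v w ψ) := by
  have hmem (c : t.children v) {y : ℕ} (hy : y ∈ t.desc c) : t.glue v w ψ y ∈ s.desc (e c) := by
    rw [glue_of_mem_desc ψ c hy]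
    exact (hψ c).bijOn.mapsTo hy
  have hne (c : t.children v) {y : ℕ} (hy : y ∈ t.desc c) : t.glue v w ψ y ≠ w := by
    intro h
    have := hmem c hy
    rw [h] at this
    exact not_mem_desc_of_mem_children (e c).2 this
  refine ⟨⟨fun y hy => ?_, fun y hy y' hy' heq => ?_, fun z hz => ?_⟩, glue_self ψ, ?_⟩
  · rcases (mem_desc_iff_eq_or_exists_children hv).1 hy with rfl | ⟨c, hyc⟩
    · rw [glue_self]
      exact mem_desc_self hw
    · exact desc_subset_of_mem_children (e c).2 (hmem c hyc)
  · rcases (mem_desc_iff_eq_or_exists_children hv).1 hy with rfl | ⟨c, hyc⟩ <;>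
      rcases (mem_desc_iff_eq_or_exists_children hv).1 hy' with rfl | ⟨c', hyc'⟩
    · rfl
    · rw [glue_self] at heq
      exact absurd heq.symm (hne c' hyc')
    · rw [glue_self] at heq
      exact absurd heq (hne c hyc)
    · have hcc' : e c = e c' := Subtype.ext (eq_of_mem_desc_of_mem_children (e c).2 (e c').2
        (hmem c hyc) (heq ▸ hmem c' hyc'))
      rw [e.injective hcc'] at hyc
      rw [glue_of_mem_desc ψ c' hyc, glue_of_mem_desc ψ c' hyc'] at heq
      exact (hψ c').bijOn.injOn hyc hyc' heq
  · rcases (mem_desc_iff_eq_or_exists_children hw).1 hz with rfl | ⟨c', hzc'⟩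
    · exact ⟨v, mem_desc_self hv, glue_self ψ⟩
    · rw [← e.apply_symm_apply c'] at hzc'
      obtain ⟨y, hy, rfl⟩ := (hψ (e.symm c')).bijOn.surjOn hzc'
      exact ⟨y, desc_subset_of_mem_children (e.symm c').2 hy, glue_of_mem_desc ψ _ hy⟩
  · intro y hy hyv
    obtain ⟨c, hyc⟩ := ((mem_desc_iff_eq_or_exists_children hv).1 hy).resolve_left hyv
    by_cases hyc' : y = c
    · subst hyc'
      rw [(mem_children.1 c.2).2.1, glue_self, glue_of_mem_desc ψ c hyc, (hψ c).map_root,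
        (mem_children.1 (e c).2).2.1]
    · rw [glue_of_mem_desc ψ c (par_mem_desc hyc hyc'), glue_of_mem_desc ψ c hyc,
        (hψ c).map_par y hyc hyc']

lemma subtreeIso_of_equiv_children (hv : v ∈ t.supp) (hw : w ∈ s.supp)
    (e : t.children v ≃ s.children w) (h : ∀ c : t.children v, SubtreeIso t c s (e c)) :
    SubtreeIso t v s w := by
  simp only [subtreeIso_iff] at h ⊢
  choose ψ hψ using h
  exact ⟨t.glue v w ψ, isSubtreeIsoMap_glue hv hw e hψ⟩

lemma selfNested_of_gam_eq
    (h : ∀ v ∈ t.supp, ∀ w ∈ t.supp, t.heightAt v = t.heightAt w → ∀ k, t.gam v k = t.gam w k) :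
    t.SelfNested := by
  intro v hv w hw hvw
  induction hn : t.heightAt v using Nat.strong_induction_on generalizing v w with
  | _ n ih =>
  obtain ⟨e, he⟩ := exists_equiv_of_card_filter_eq (f := t.heightAt)
    (A := t.children v) (B := t.children w) (h v hv w hw hvw)
  refine subtreeIso_of_equiv_children hv hw e fun c => ?_
  exact ih _ (hn ▸ heightAt_lt_of_mem_children c.2) c (mem_children.1 c.2).1 (e c)
    (mem_children.1 (e c).2).1 (he c).symm rfl

lemma selfNested_iff_gam_eq : t.SelfNested ↔
    ∀ v ∈ t.supp, ∀ w ∈ t.supp, t.heightAt v = t.heightAt w → ∀ k, t.gam v k = t.gam w k :=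
  ⟨fun hsn v hv w hw hvw => (hsn v hv w hw hvw).gam_eq, selfNested_of_gam_eq⟩

lemma mem_profile {h₁ h₂ x : ℕ} :
    x ∈ t.profile h₁ h₂ ↔ ∃ v ∈ t.supp, t.heightAt v = h₁ ∧ t.gam v h₂ = x := by
  simp [profile, and_assoc]

/-- Only `h₂ < h₁` needs checking, since `γ_{h₂}(v) = 0` once `H(t[v]) ≤ h₂`. -/
lemma profile_constant_iff_gam_eq :
    (∀ h₁ h₂, h₂ < h₁ → h₁ ≤ t.height →
      ∀ x ∈ t.profile h₁ h₂, ∀ y ∈ t.profile h₁ h₂, x = y) ↔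
    ∀ v ∈ t.supp, ∀ w ∈ t.supp, t.heightAt v = t.heightAt w → ∀ k, t.gam v k = t.gam w k := by
  simp only [mem_profile]
  refine ⟨fun hp v hv w hw hvw k => ?_, ?_⟩
  · by_cases hk : k < t.heightAt v
    · exact hp _ k hk (heightAt_le_height hv) _ ⟨v, hv, rfl, rfl⟩ _ ⟨w, hw, hvw.symm, rfl⟩
    · rw [gam_eq_zero_of_heightAt_le (not_lt.1 hk),
        gam_eq_zero_of_heightAt_le (hvw ▸ not_lt.1 hk)]
  · rintro hg h₁ h₂ - - _ ⟨v, hv, rfl, rfl⟩ _ ⟨w, hw, hw₁, rfl⟩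
    exact hg v hv w hw hw₁.symm h₂

end FTree

/-- A tree is self-nested if and only if, for every pair of heights
`0 ≤ h2 < h1 ≤ H(t)`, all the components of the height-profile entry `ρ_t(h1,h2)` are
equal. -/
theorem selfNested_iff_profile_constant (t : FTree) :
    t.SelfNested ↔
      ∀ h1 h2, h2 < h1 → h1 ≤ t.height →
        ∀ x ∈ t.profile h1 h2, ∀ y ∈ t.profile h1 h2, x = y := by
  rw [FTree.selfNested_iff_gam_eq, FTree.profile_constant_iff_gam_eq]
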